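/- For all n ≥ 2, √θ_{n+1} - √θ_n < ln(p_n)/√p_n, where θ_n = ∑_{i=1}^n ln(p_i). -/

import Mathlib

/-!
Put `p = p n` and `c = log p / √p`. Since `θ (n + 1) = θ n + log p (n + 1)` and Bertrand gives
`p (n + 1) < 2 p`, it suffices that `√(θ n + log (2p)) - √(θ n) ≤ c`, i.e.
`log (2p) ≤ 2 c √(θ n) + c²`. Now `θ n` is Chebyshev's `θ(p)`, and dropping `c²` it is enough
that `p log (2p)² ≤ 4 θ(p) (log p)²`. For `p ≥ 256` this follows from
`θ(x) ≥ x log 2 - log (x + 1) - √x log x`, which combines `2^x ≤ (x + 1) lcm(1, …, x)` with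
`lcm(1, …, x) ≤ x^√x · x#`. For `5 ≤ p < 256` it follows from `8^p ≤ (p#)^4`, which by
monotonicity of the primorial needs checking at only ten points. For `p = 3` the term `c²` is
needed.
-/

noncomputable def p (n : ℕ) : ℕ := Nat.nth Nat.Prime (n - 1)

noncomputable def θ (n : ℕ) : ℝ := ∑ i ∈ Finset.Icc 1 n, Real.log (p i)

open Real

theorem Nat.nth_prime_succ_lt_two_mul (k : ℕ) :
    Nat.nth Nat.Prime (k + 1) < 2 * Nat.nth Nat.Prime k := by
  set q := Nat.nth Nat.Prime k
  have hq : q.Prime := Nat.prime_nth_prime k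
  obtain ⟨r, hr, hqr, hr2⟩ := Nat.exists_prime_lt_and_le_two_mul q hq.ne_zero
  have hk : k < Nat.count Nat.Prime r :=
    (Nat.lt_nth_iff_count_lt Nat.infinite_setOfPred_prime).2 hqr
  have hle : Nat.nth Nat.Prime (k + 1) ≤ r := by
    simpa [Nat.nth_count hr] using Nat.nth_monotone Nat.infinite_setOfPred_prime hk
  have hne : r ≠ 2 * q := fun h => by
    have := hr.eq_one_or_self_of_dvd 2 (h ▸ dvd_mul_right 2 q)
    have := hq.two_le
    omega
  omega

theorem Nat.lcmUpto_le_pow_sqrt_mul_primorial (n : ℕ) :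
    Nat.lcmUpto n ≤ n ^ Nat.sqrt n * primorial n := by
  rcases n.eq_zero_or_pos with rfl | hn
  · decide
  rw [Nat.lcmUpto_eq_prod_pow_log, primorial_eq_prod_primesLE,
    ← Finset.prod_filter_mul_prod_filter_not (Nat.primesLE n) (· ≤ Nat.sqrt n)]
  gcongr ?_ * ?_
  · have hcard : ((Nat.primesLE n).filter (· ≤ Nat.sqrt n)).card ≤ Nat.sqrt n := by
      calc _ ≤ (Finset.Ioc 0 (Nat.sqrt n)).card := by
            refine Finset.card_le_card fun q hq => ?_
            simp only [Finset.mem_filter, Nat.mem_primesLE] at hq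
            exact Finset.mem_Ioc.2 ⟨hq.1.2.pos, hq.2⟩
        _ = Nat.sqrt n := by simp
    calc _ ≤ n ^ ((Nat.primesLE n).filter (· ≤ Nat.sqrt n)).card :=
          Finset.prod_le_pow_card _ _ _ fun q _ => Nat.pow_log_le_self q hn.ne'
      _ ≤ n ^ Nat.sqrt n := Nat.pow_le_pow_right hn hcard
  · calc _ ≤ ∏ q ∈ (Nat.primesLE n).filter (¬ · ≤ Nat.sqrt n), q := by
          refine Finset.prod_le_prod' fun q hq => ?_
          simp only [Finset.mem_filter, Nat.mem_primesLE, not_le] at hq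
          have hlog : Nat.log q n < 2 :=
            Nat.log_lt_of_lt_pow hn.ne' (Nat.sqrt_lt'.1 hq.2)
          calc q ^ Nat.log q n ≤ q ^ 1 := Nat.pow_le_pow_right hq.1.2.pos (by omega)
            _ = q := pow_one q
      _ ≤ ∏ q ∈ Nat.primesLE n, q :=
          Finset.prod_le_prod_of_subset_of_one_le' (Finset.filter_subset _ _)
            fun q hq _ => (Nat.prime_of_mem_primesLE hq).one_le

theorem Chebyshev.theta_ge_mul_log_two_sub_sqrt_mul_log (n : ℕ) :
    n * log 2 - log (n + 1) - √n * log n ≤ Chebyshev.theta n := by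
  rcases n.eq_zero_or_pos with rfl | hn
  · simp
  have hψ := Chebyshev.psi_ge n
  have hlcm : log (Nat.lcmUpto n) ≤ Nat.sqrt n * log n + Chebyshev.theta n := by
    rw [Chebyshev.theta_eq_log_primorial, Nat.floor_natCast, ← log_pow,
      ← log_mul (by positivity) (by exact_mod_cast (primorial_pos n).ne')]
    exact log_le_log (by exact_mod_cast Nat.lcmUpto_pos n)
      (by exact_mod_cast Nat.lcmUpto_le_pow_sqrt_mul_primorial n)
  have hsqrt : (Nat.sqrt n : ℝ) * log n ≤ √n * log n :=
    mul_le_mul_of_nonneg_right Real.nat_sqrt_le_real_sqrt (log_natCast_nonneg n)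
  rw [Chebyshev.psi_eq_log_lcmUpto] at hψ
  linarith

theorem eight_pow_le_primorial_pow_four {q : ℕ} (h5 : 5 ≤ q) (h256 : q < 256) :
    8 ^ q ≤ primorial q ^ 4 := by
  have of_le {a b : ℕ} (hab : 8 ^ b ≤ primorial a ^ 4) (haq : a ≤ q) (hqb : q ≤ b) :
      8 ^ q ≤ primorial q ^ 4 :=
    calc 8 ^ q ≤ 8 ^ b := Nat.pow_le_pow_right (by norm_num) hqb
      _ ≤ primorial a ^ 4 := hab
      _ ≤ primorial q ^ 4 := Nat.pow_le_pow_left (primorial_mono haq) 4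
  have hcases : q ≤ 6 ∨ 7 ≤ q ∧ q ≤ 10 ∨ 11 ≤ q ∧ q ≤ 14 ∨ 15 ≤ q ∧ q ≤ 19 ∨ 20 ≤ q ∧ q ≤ 30 ∨
      31 ≤ q ∧ q ≤ 50 ∨ 51 ≤ q ∧ q ≤ 78 ∨ 79 ≤ q ∧ q ≤ 135 ∨ 136 ≤ q ∧ q ≤ 224 ∨ 225 ≤ q := by
    omega
  rcases hcases with h | ⟨h, h'⟩ | ⟨h, h'⟩ | ⟨h, h'⟩ | ⟨h, h'⟩ | ⟨h, h'⟩ | ⟨h, h'⟩ | ⟨h, h'⟩ |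
    ⟨h, h'⟩ | h
  · exact of_le (a := 5) (b := 6) (by decide +kernel) h5 h
  · exact of_le (a := 7) (b := 10) (by decide +kernel) h h'
  · exact of_le (a := 11) (b := 14) (by decide +kernel) h h'
  · exact of_le (a := 15) (b := 19) (by decide +kernel) h h'
  · exact of_le (a := 20) (b := 30) (by decide +kernel) h h'
  · exact of_le (a := 31) (b := 50) (by decide +kernel) h h'
  · exact of_le (a := 51) (b := 78) (by decide +kernel) h h'
  · exact of_le (a := 79) (b := 135) (by decide +kernel) h h'
  · exact of_le (a := 136) (b := 224) (by decide +kernel) h h'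
  · exact of_le (a := 225) (b := 256) (by decide +kernel) h h256.le

theorem log_two_mul_sq_le {x : ℝ} (hx : 5 ≤ x) : log (2 * x) ^ 2 ≤ 3 * log 2 * log x ^ 2 := by
  have hl := log_two_gt_d9
  have hl' := log_two_lt_d9
  have h5 : 23 * log 2 ≤ 10 * log 5 := by
    have := log_le_log (by norm_num) (by norm_num : (2 : ℝ) ^ 23 ≤ 5 ^ 10)
    simpa [log_pow] using this
  have ht : log 5 ≤ log x := log_le_log (by norm_num) hx
  rw [log_mul two_ne_zero (by linarith)]
  nlinarith

theorem mul_log_two_mul_sq_le {x : ℝ} (hx : 256 ≤ x) :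
    x * log (2 * x) ^ 2 ≤ 4 * (x * log 2 - log (x + 1) - √x * log x) * log x ^ 2 := by
  have hl := log_two_gt_d9
  have hl' := log_two_lt_d9
  set s := √x with hs
  set t := log x with ht
  have hx0 : 0 < x := by linarith
  have hs2 : s ^ 2 = x := sq_sqrt hx0.le
  have hs16 : 16 ≤ s := by
    rw [hs, show (16 : ℝ) = √(16 ^ 2) by rw [sqrt_sq (by norm_num)]]
    exact sqrt_le_sqrt (by linarith)
  have ht_lo : 8 * log 2 ≤ t := by
    have := log_le_log (by norm_num) (show (2 : ℝ) ^ 8 ≤ x by linarith)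
    simpa [log_pow] using this
  have ht_hi : t ≤ 8 * log 2 - 2 + s / 8 := by
    have h := log_le_sub_one_of_pos (show 0 < s / 16 by positivity)
    rw [log_div (by positivity) (by norm_num), show (16 : ℝ) = 2 ^ 4 by norm_num, log_pow, hs,
      log_sqrt hx0.le] at h
    push_cast at h
    linarith
  have hlog2x : log (2 * x) = log 2 + t := log_mul two_ne_zero hx0.ne'
  have hlog1 : log (x + 1) ≤ log 2 + t := hlog2x ▸ log_le_log (by linarith) (by linarith)
  have h1 : log (2 * x) ^ 2 ≤ 81 / 64 * t ^ 2 := by rw [hlog2x]; nlinarith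
  have h2 : 81 / 64 * x ≤ 4 * (x * log 2 - log (x + 1) - s * t) := by
    nlinarith [mul_le_mul_of_nonneg_left ht_hi (by linarith : (0 : ℝ) ≤ s)]
  calc x * log (2 * x) ^ 2 ≤ x * (81 / 64 * t ^ 2) := by gcongr
    _ = 81 / 64 * x * t ^ 2 := by ring
    _ ≤ _ := by gcongr

theorem sqrt_add_sub_sqrt_le {a d c : ℝ} (ha : 0 ≤ a) (hc : 0 ≤ c)
    (h : d ≤ 2 * c * √a + c ^ 2) : √(a + d) - √a ≤ c := by
  rw [sub_le_iff_le_add, sqrt_le_iff]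
  exact ⟨by positivity, by nlinarith [sq_sqrt ha]⟩

theorem le_two_mul_div_sqrt_mul_sqrt_add_sq {x T M ℓ : ℝ} (hx : 0 < x) (hT : 0 ≤ T)
    (hℓ : 0 ≤ ℓ) (h : x * M ^ 2 ≤ 4 * T * ℓ ^ 2) : M ≤ 2 * (ℓ / √x) * √T + (ℓ / √x) ^ 2 := by
  have hsx : 0 < √x := sqrt_pos.2 hx
  have hsq : (M * √x) ^ 2 ≤ (2 * ℓ * √T) ^ 2 := by
    rw [mul_pow, mul_pow, sq_sqrt hx.le, mul_pow, sq_sqrt hT]; linarith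
  have hM : M * √x ≤ 2 * ℓ * √T := (abs_le_of_sq_le_sq' hsq (by positivity)).2
  calc M ≤ 2 * (ℓ / √x) * √T := by
        rw [mul_div_assoc', div_mul_eq_mul_div, le_div_iff₀ hsx]; linarith
    _ ≤ _ := le_add_of_nonneg_right (sq_nonneg _)

lemma p_prime (n : ℕ) : (p n).Prime := Nat.prime_nth_prime _

lemma p_succ_lt_two_mul {n : ℕ} (hn : 1 ≤ n) : p (n + 1) < 2 * p n := by
  obtain ⟨k, rfl⟩ := Nat.exists_eq_add_of_le' hn
  exact Nat.nth_prime_succ_lt_two_mul k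

lemma five_le_p {n : ℕ} (hn : 3 ≤ n) : 5 ≤ p n :=
  Nat.nth_prime_two_eq_five ▸ Nat.nth_monotone Nat.infinite_setOfPred_prime (by omega)

lemma θ_succ (n : ℕ) : θ (n + 1) = θ n + log (p (n + 1)) := by
  rw [θ, θ, Finset.sum_Icc_succ_top (by omega)]

lemma θ_nonneg (n : ℕ) : 0 ≤ θ n :=
  Finset.sum_nonneg fun i _ => log_natCast_nonneg (p i)

lemma θ_eq_theta {n : ℕ} (hn : 1 ≤ n) : θ n = Chebyshev.theta (p n) := by
  rw [Chebyshev.theta_eq_sum_primesLE_log, θ]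
  refine Finset.sum_nbij' p (fun q => Nat.count Nat.Prime q + 1) (fun i hi => ?_) (fun q hq => ?_)
    (fun i hi => ?_) (fun q hq => ?_) (fun _ _ => rfl)
  · rw [Finset.mem_Icc] at hi
    refine Nat.mem_primesLE.2 ⟨?_, p_prime i⟩
    exact Nat.nth_monotone Nat.infinite_setOfPred_prime (by omega)
  · have : Nat.count Nat.Prime q ≤ n - 1 :=
      (Nat.count_le_iff_le_nth Nat.infinite_setOfPred_prime).2 (Nat.le_of_mem_primesLE hq)
    rw [Finset.mem_Icc]
    omega
  · rw [Finset.mem_Icc] at hi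
    rw [p, Nat.count_nth_of_infinite Nat.infinite_setOfPred_prime]
    omega
  · simp [p, Nat.nth_count (Nat.prime_of_mem_primesLE hq)]

lemma sqrt_θ_succ_sub_sqrt_θ_lt {n : ℕ} (hn : 1 ≤ n)
    (h : log (2 * p n) ≤ 2 * (log (p n) / √(p n)) * √(θ n) + (log (p n) / √(p n)) ^ 2) :
    √(θ (n + 1)) - √(θ n) < log (p n) / √(p n) := by
  have hlog : log (p (n + 1)) < log (2 * p n) :=
    log_lt_log (by exact_mod_cast (p_prime _).pos) (by exact_mod_cast p_succ_lt_two_mul hn)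
  calc √(θ (n + 1)) - √(θ n) < √(θ n + log (2 * p n)) - √(θ n) := by
        rw [θ_succ]
        gcongr
        exact add_nonneg (θ_nonneg n) (log_natCast_nonneg _)
    _ ≤ _ := sqrt_add_sub_sqrt_le (θ_nonneg n) (by positivity) h

theorem natCast_mul_log_two_mul_sq_le_theta {q : ℕ} (hq : 5 ≤ q) :
    (q : ℝ) * log (2 * q) ^ 2 ≤ 4 * Chebyshev.theta q * log q ^ 2 := by
  rcases lt_or_ge q 256 with hsmall | hlarge
  · have hθ : 3 * q * log 2 ≤ 4 * Chebyshev.theta q := by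
      have h8 : (8 : ℝ) ^ q ≤ primorial q ^ 4 := by
        exact_mod_cast eight_pow_le_primorial_pow_four hq hsmall
      have hlog := log_le_log (by positivity) h8
      rw [Chebyshev.theta_eq_log_primorial, Nat.floor_natCast]
      rw [log_pow, log_pow, show (8 : ℝ) = 2 ^ 3 by norm_num, log_pow] at hlog
      push_cast at hlog
      linarith
    have hq' := log_two_mul_sq_le (x := q) (by exact_mod_cast hq)
    nlinarith [sq_nonneg (log (q : ℝ)), (Nat.cast_nonneg q : (0 : ℝ) ≤ q)]
  · calc (q : ℝ) * log (2 * q) ^ 2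
        ≤ 4 * (q * log 2 - log (q + 1) - √q * log q) * log q ^ 2 :=
          mul_log_two_mul_sq_le (by exact_mod_cast hlarge)
      _ ≤ 4 * Chebyshev.theta q * log q ^ 2 := by
          gcongr
          exact Chebyshev.theta_ge_mul_log_two_sub_sqrt_mul_log q

theorem log_six_le :
    log (2 * 3) ≤ 2 * (log 3 / √3) * √(log 2 + log 3) + (log 3 / √3) ^ 2 := by
  have hl := log_two_lt_d9
  have hl' := log_two_gt_d9
  have hu : 1 ≤ log 3 := by
    rw [le_log_iff_exp_le (by norm_num)]; linarith [exp_one_lt_d9]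
  have ha : 0 < √3 := by positivity
  have ha2 : √3 ^ 2 = 3 := sq_sqrt (by norm_num)
  have hb2 : √(log 2 + log 3) ^ 2 = log 2 + log 3 := sq_sqrt (by linarith)
  have hab : 3 / 4 * √3 ≤ √(log 2 + log 3) := by
    apply abs_le_of_sq_le_sq' _ (sqrt_nonneg _) |>.2
    nlinarith
  rw [log_mul two_ne_zero three_ne_zero, div_pow, ha2]
  have hmain : 3 / 2 * log 3 ≤ 2 * (log 3 / √3) * √(log 2 + log 3) := by
    rw [mul_div_assoc', div_mul_eq_mul_div (2 * log 3), le_div_iff₀ ha]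
    nlinarith
  nlinarith

theorem stmt14 : ∀ n : ℕ, 2 ≤ n → Real.sqrt (θ (n+1)) - Real.sqrt (θ n) < Real.log (p n) / Real.sqrt (p n) := by
  intro n hn
  apply sqrt_θ_succ_sub_sqrt_θ_lt (by omega)
  rcases hn.eq_or_lt with rfl | hn
  · have hp : p 2 = 3 := Nat.nth_prime_one_eq_three
    have hθ : θ 2 = log 2 + log 3 := by
      rw [θ_succ, show θ 1 = log 2 by simp [θ, p]]; simp [hp]
    rw [hθ, hp]
    exact_mod_cast log_six_le
  · apply le_two_mul_div_sqrt_mul_sqrt_add_sq (by exact_mod_cast (p_prime n).pos) (θ_nonneg n)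
      (log_natCast_nonneg _)
    rw [θ_eq_theta (by omega)]
    exact natCast_mul_log_two_mul_sq_le_theta (five_le_p hn)
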